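/- arXiv:1104.0920 — 2 statements merged into one kernel-verified Lean document; each statement's English description precedes it below -/
import Mathlib

section
/- Let G₀ be a connected simple graph and u ∈ V(G₀). Let k ≥ 4 and let T be a tree on k vertices with T not isomorphic to the path P_k and T not isomorphic to the star S_k, and let w be any vertex of T. Let G₁ be the graph obtained from the disjoint union of G₀ and T by identifying u with w; let G₂ be the graph obtained from the disjoint union of G₀ and the path P_k by identifying u with an endvertex of P_k; and let G₃ be the graph obtained from the disjoint union of G₀ and the star S_k by identifying u with the center of S_k. Then H(G₂) < H(G₁) < H(G₃). -/
open Finset SimpleGraph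

open Classical in
/-- The Harary index: half the sum, over ordered pairs of distinct vertices, of the
reciprocal of the shortest-path distance (so each unordered pair is counted once). -/
noncomputable def harary {V : Type*} [Fintype V] (G : SimpleGraph V) : ℝ :=
  (∑ u : V, ∑ v : V, if u = v then 0 else (1 : ℝ) / (G.dist u v)) / 2

/-- The path graph `P_n` on `n` vertices. -/
def pathG (n : ℕ) : SimpleGraph (Fin n) :=
  SimpleGraph.fromRel (fun x y => (y : ℕ) = (x : ℕ) + 1)

/-- The star graph `S_n` on `n` vertices, with center `0`. -/
def starG (n : ℕ) : SimpleGraph (Fin n) :=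
  SimpleGraph.fromRel (fun x y => (x : ℕ) = 0 ∧ (y : ℕ) ≠ 0)

/-- The spider (starlike tree) `S(L 0, …, L (k-1))`: a center `none` together with `k`
disjoint paths, the `i`-th having `L i` vertices, the center joined to vertex `0` of each leg. -/
def spider {k : ℕ} (L : Fin k → ℕ) : SimpleGraph (Option (Σ i : Fin k, Fin (L i))) :=
  SimpleGraph.fromRel (fun x y =>
    (∃ (i : Fin k) (j : Fin (L i)), x = none ∧ y = some ⟨i, j⟩ ∧ (j : ℕ) = 0) ∨
    (∃ (i : Fin k) (j j' : Fin (L i)),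
      x = some ⟨i, j⟩ ∧ y = some ⟨i, j'⟩ ∧ (j' : ℕ) = (j : ℕ) + 1))

/-- Leg lengths of the balanced starlike tree `BS n k`: the legs sum to `n - 1` and
pairwise differ by at most `1`. -/
def balancedLegs (n k : ℕ) : Fin k → ℕ :=
  fun i => (n - 1) / k + if (i : ℕ) < (n - 1) % k then 1 else 0

/-- The balanced starlike tree `BS_{n,k}` on `n` vertices with `k` legs of almost equal length. -/
def BS (n k : ℕ) : SimpleGraph (Option (Σ i : Fin k, Fin (balancedLegs n k i))) :=
  spider (balancedLegs n k)

/-- Leg lengths of the broom `B_{n,k}`: one leg with `n - k` vertices, `k - 1` legs with one. -/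
def broomLegs (n k : ℕ) : Fin k → ℕ := fun i => if (i : ℕ) = 0 then n - k else 1

/-- The broom `B_{n,k} = S(n-k, 1, …, 1)`. -/
def broom (n k : ℕ) : SimpleGraph (Option (Σ i : Fin k, Fin (broomLegs n k i))) :=
  spider (broomLegs n k)

/-- Leg lengths of the spur `A_{n,m}`: `n - m - 1` legs with two vertices, the rest with one. -/
def spurLegs (n m : ℕ) : Fin m → ℕ := fun i => if (i : ℕ) < n - m - 1 then 2 else 1

/-- The spur `A_{n,m}`: the star `S_{m+1}` with a pendent edge attached to `n - m - 1`
of its pendent vertices. -/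
def spur (n m : ℕ) : SimpleGraph (Option (Σ i : Fin m, Fin (spurLegs n m i))) :=
  spider (spurLegs n m)

/-- The caterpillar `C_{n,d,i}`: a path `v_0 v_1 … v_d` with `n - d - 1` pendent
vertices attached at `v_i`. -/
def caterpillar (n d i : ℕ) : SimpleGraph (Fin (d + 1) ⊕ Fin (n - d - 1)) :=
  SimpleGraph.fromRel (fun x y =>
    (∃ a b : Fin (d + 1), x = Sum.inl a ∧ y = Sum.inl b ∧ (b : ℕ) = (a : ℕ) + 1) ∨
    (∃ (a : Fin (d + 1)) (p : Fin (n - d - 1)), (a : ℕ) = i ∧ x = Sum.inl a ∧ y = Sum.inr p))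

/-- Degree of a vertex. -/
noncomputable def deg {V : Type*} [Fintype V] (G : SimpleGraph V) (v : V) : ℕ :=
  (G.neighborSet v).ncard

/-- Eccentricity of a vertex: the maximum distance to another vertex. -/
noncomputable def ecc {V : Type*} [Fintype V] (G : SimpleGraph V) (v : V) : ℕ :=
  Finset.univ.sup fun u => G.dist v u

/-- Diameter of a graph: the maximum eccentricity. -/
noncomputable def graphDiam {V : Type*} [Fintype V] (G : SimpleGraph V) : ℕ :=
  Finset.univ.sup fun v => ecc G v

/-- Radius of a graph: the minimum eccentricity. -/
noncomputable def graphRadius {V : Type*} [Fintype V] (G : SimpleGraph V) : ℕ :=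
  sInf (Set.range fun v => ecc G v)

/-- Matching number: the maximum cardinality of a set of pairwise non-incident edges. -/
noncomputable def matchingNumber {V : Type*} [Fintype V] (G : SimpleGraph V) : ℕ :=
  sSup {k | ∃ M : Finset (Sym2 V), M.card = k ∧ (∀ e ∈ M, e ∈ G.edgeSet) ∧
    ∀ e ∈ M, ∀ f ∈ M, e ≠ f → ∀ v : V, ¬(v ∈ e ∧ v ∈ f)}

/-- Independence number: the maximum cardinality of a set of pairwise non-adjacent vertices. -/
noncomputable def indepNum {V : Type*} [Fintype V] (G : SimpleGraph V) : ℕ :=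
  sSup {k | ∃ s : Finset V, s.card = k ∧ ∀ u ∈ s, ∀ v ∈ s, u ≠ v → ¬ G.Adj u v}


/-- `graft G u H w` is the graph obtained from the disjoint union of `G` and `H`
by identifying the vertex `u` of `G` with the vertex `w` of `H`. -/
def graft {V W : Type*} (G : SimpleGraph V) (u : V) (H : SimpleGraph W) (w : W) :
    SimpleGraph (V ⊕ {x : W // x ≠ w}) :=
  SimpleGraph.fromRel (fun a b =>
    (∃ x y : V, G.Adj x y ∧ a = Sum.inl x ∧ b = Sum.inl y) ∨
    (∃ x y : {z : W // z ≠ w}, H.Adj x.1 y.1 ∧ a = Sum.inr x ∧ b = Sum.inr y) ∨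
    (∃ y : {z : W // z ≠ w}, H.Adj w y.1 ∧ a = Sum.inl u ∧ b = Sum.inr y))


/-!
Grafting `H` at `w` onto `G` at `u` gives
`harary (graft G u H w) = harary G + harary H + ∑_{x ≠ u} ∑_{y ≠ w} 1 / (d_G(x, u) + d_H(w, y))`,
since every path between the two sides passes through the glued vertex. For `H` on a fixed number
of vertices the right-hand side therefore increases when, for every `ℓ ≥ 1`, the number of ordered
pairs of `H` at distance `> ℓ` and the number of vertices at distance `> ℓ` from `w` decrease:
this is summation by parts, `1 / d` being decreasing in `d`.

Among connected graphs on `n` vertices the path has the most far pairs, `(n - ℓ)(n - ℓ - 1)`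
(delete a vertex that keeps the graph connected and induct), and its end vertex has the most far
vertices, `n - 1 - ℓ`; a graph that is not a path has no pair at distance `n - 1`, which makes the
first inequality strict. The star has no pair at distance `> 2` and no vertex at distance `> 1`
from its centre, all trees on `n` vertices have the same number of pairs at distance `> 1`, and a
tree of diameter at most `2` is a star, which makes the second inequality strict.
-/

section SummationByParts

variable {ι κ : Type*} {s : Finset ι} {t : Finset κ} {d : ι → ℕ} {e : κ → ℕ} {g : ℕ → ℝ}
  {K : ℕ}

lemma sum_comp_eq_sub_sum_card_lt (hd : ∀ i ∈ s, d i ∈ Icc 1 K) :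
    ∑ i ∈ s, g (d i) = #s * g 1 - ∑ ℓ ∈ Ico 1 K, (g ℓ - g (ℓ + 1)) * #{i ∈ s | ℓ < d i} := by
  have key : ∀ i ∈ s,
      g (d i) = g 1 - ∑ ℓ ∈ Ico 1 K, if ℓ < d i then g ℓ - g (ℓ + 1) else 0 := by
    intro i hi
    obtain ⟨h₁, h₂⟩ := mem_Icc.mp (hd i hi)
    have hIco : {ℓ ∈ Ico 1 K | ℓ < d i} = Ico 1 (d i) := by
      ext ℓ
      simp only [mem_filter, mem_Ico]
      omega
    have htelescope := sum_Ico_sub g h₁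
    rw [← sum_filter, hIco]
    simp only [← neg_sub (g (_ + 1)), sum_neg_distrib]
    linarith
  rw [sum_congr rfl key, sum_sub_distrib, sum_const, nsmul_eq_mul, sum_comm]
  congr 1
  refine sum_congr rfl fun ℓ _ => ?_
  rw [← sum_filter, sum_const, nsmul_eq_mul, mul_comm]

lemma sum_comp_le_sum_comp_of_card_lt_le (hd : ∀ i ∈ s, d i ∈ Icc 1 K)
    (he : ∀ j ∈ t, e j ∈ Icc 1 K) (hst : #s = #t) (hg : ∀ ℓ, 1 ≤ ℓ → g (ℓ + 1) ≤ g ℓ)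
    (hcount : ∀ ℓ, 1 ≤ ℓ → #{j ∈ t | ℓ < e j} ≤ #{i ∈ s | ℓ < d i}) :
    ∑ i ∈ s, g (d i) ≤ ∑ j ∈ t, g (e j) := by
  rw [sum_comp_eq_sub_sum_card_lt hd, sum_comp_eq_sub_sum_card_lt he, hst]
  gcongr with ℓ hℓ
  · exact sub_nonneg.mpr (hg ℓ (mem_Ico.mp hℓ).1)
  · exact hcount ℓ (mem_Ico.mp hℓ).1

lemma sum_comp_lt_sum_comp_of_card_lt_le (hd : ∀ i ∈ s, d i ∈ Icc 1 K)
    (he : ∀ j ∈ t, e j ∈ Icc 1 K) (hst : #s = #t) (hg : ∀ ℓ, 1 ≤ ℓ → g (ℓ + 1) < g ℓ)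
    (hcount : ∀ ℓ, 1 ≤ ℓ → #{j ∈ t | ℓ < e j} ≤ #{i ∈ s | ℓ < d i})
    (hstrict : ∃ ℓ, #{j ∈ t | ℓ < e j} < #{i ∈ s | ℓ < d i}) :
    ∑ i ∈ s, g (d i) < ∑ j ∈ t, g (e j) := by
  obtain ⟨ℓ₀, hℓ₀⟩ := hstrict
  have hℓ₀Ico : ℓ₀ ∈ Ico 1 K := by
    refine mem_Ico.mpr ⟨Nat.one_le_iff_ne_zero.mpr fun h => ?_, not_le.mp fun h => ?_⟩
    · have := card_filter_le s (fun i => ℓ₀ < d i)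
      rw [filter_true_of_mem (s := t) fun j hj => by have := mem_Icc.mp (he j hj); omega] at hℓ₀
      omega
    · rw [filter_false_of_mem (s := s) fun i hi => by have := mem_Icc.mp (hd i hi); omega] at hℓ₀
      simp at hℓ₀
  rw [sum_comp_eq_sub_sum_card_lt hd, sum_comp_eq_sub_sum_card_lt he, hst]
  refine sub_lt_sub_left (sum_lt_sum (fun ℓ hℓ => ?_) ⟨ℓ₀, hℓ₀Ico, ?_⟩) _
  · exact mul_le_mul_of_nonneg_left (by exact_mod_cast hcount ℓ (mem_Ico.mp hℓ).1)
      (sub_nonneg.mpr (hg ℓ (mem_Ico.mp hℓ).1).le)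
  · exact mul_lt_mul_of_pos_left (by exact_mod_cast hℓ₀)
      (sub_pos.mpr (hg ℓ₀ (mem_Ico.mp hℓ₀Ico).1))

end SummationByParts

namespace SimpleGraph

section Metric

variable {α β : Type*} {G : SimpleGraph α} {a b x : α}

lemma Hom.dist_le {G' : SimpleGraph β} (f : G →g G') (h : G.Reachable a b) :
    G'.dist (f a) (f b) ≤ G.dist a b := by
  obtain ⟨p, hp⟩ := h.exists_walk_length_eq_dist
  simpa [hp] using SimpleGraph.dist_le (p.map f)

lemma Reachable.le_add_dist {f : α → ℕ} (hf : ∀ a b, G.Adj a b → f b ≤ f a + 1)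
    (h : G.Reachable a b) : f b ≤ f a + G.dist a b := by
  obtain ⟨p, hp⟩ := h.exists_walk_length_eq_dist
  rw [← hp]
  clear hp h
  induction p with
  | nil => simp
  | cons hadj q ih =>
    have := hf _ _ hadj
    rw [Walk.length_cons]
    omega

lemma Adj.dist_le_dist_add_one (h : G.Adj a b) : G.dist x b ≤ G.dist x a + 1 := by
  rcases h.diff_dist_adj (u := x) with h | h | h <;> omega

lemma Connected.dist_le_card_sub_one [Fintype α] (hG : G.Connected) (a b : α) :
    G.dist a b ≤ Fintype.card α - 1 := by
  obtain ⟨p, hp, hl⟩ := hG.exists_path_of_dist a b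
  have := hp.length_lt
  omega

lemma Connected.dist_mem_Icc [Fintype α] (hG : G.Connected) (h : a ≠ b) :
    G.dist a b ∈ Icc 1 (Fintype.card α - 1) :=
  mem_Icc.mpr ⟨hG.pos_dist_of_ne h, hG.dist_le_card_sub_one a b⟩

lemma Walk.dist_getVert_add_le (p : G.Walk a b) (i m : ℕ) :
    G.dist (p.getVert i) (p.getVert (i + m)) ≤ m := by
  have h := dist_le ((p.drop i).take m)
  rw [Walk.take_length] at h
  rw [← Walk.drop_getVert]
  omega

lemma Walk.dist_getVert_of_length_eq_dist {p : G.Walk a b} (hp : p.length = G.dist a b)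
    {i j : ℕ} (hij : i ≤ j) (hj : j ≤ p.length) :
    G.dist (p.getVert i) (p.getVert j) = j - i := by
  obtain ⟨m, rfl⟩ := Nat.exists_eq_add_of_le hij
  have h₁ := p.dist_getVert_add_le 0 i
  have h₂ := p.dist_getVert_add_le (i + m) (p.length - (i + m))
  have h₃ := p.dist_getVert_add_le i m
  rw [Walk.getVert_zero, zero_add] at h₁
  rw [Nat.add_sub_cancel' hj, Walk.getVert_length] at h₂
  have t₁ : G.dist a b ≤ G.dist a (p.getVert i) + G.dist (p.getVert i) b :=
    (p.take i).reachable.dist_triangle_left b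
  have t₂ : G.dist (p.getVert i) b ≤ G.dist (p.getVert i) (p.getVert (i + m)) +
      G.dist (p.getVert (i + m)) b := by
    simpa only [Walk.drop_getVert] using ((p.drop i).take m).reachable.dist_triangle_left b
  omega

end Metric

section FarPairs

variable {α : Type*} [Fintype α] (G : SimpleGraph α)

noncomputable def farPairs (ℓ : ℕ) : Finset (α × α) := {p | ℓ < G.dist p.1 p.2}

noncomputable def farFrom (x : α) (ℓ : ℕ) : Finset α := {b | ℓ < G.dist x b}

variable {G}

lemma card_farPairs_eq_zero {ℓ : ℕ} : #(G.farPairs ℓ) = 0 ↔ ∀ a b, G.dist a b ≤ ℓ := by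
  simp [farPairs, filter_eq_empty_iff]

lemma card_farPairs_pos {ℓ : ℕ} : 0 < #(G.farPairs ℓ) ↔ ∃ a b, ℓ < G.dist a b := by
  simp [farPairs, card_pos, filter_nonempty_iff]

lemma card_farFrom_eq_zero {x : α} {ℓ : ℕ} : #(G.farFrom x ℓ) = 0 ↔ ∀ b, G.dist x b ≤ ℓ := by
  simp [farFrom, filter_eq_empty_iff]

lemma card_farPairs_eq_sum (ℓ : ℕ) :
    #(G.farPairs ℓ) = ∑ a, ∑ b, if ℓ < G.dist a b then 1 else 0 := by
  rw [farPairs, card_filter, Fintype.sum_prod_type]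

lemma filter_offDiag_eq_farPairs (ℓ : ℕ) :
    {p ∈ (univ : Finset α).offDiag | ℓ < G.dist p.1 p.2} = G.farPairs ℓ := by
  ext ⟨a, b⟩
  simp only [mem_filter, mem_offDiag, mem_univ, true_and, farPairs, and_iff_right_iff_imp]
  rintro h rfl
  simp at h

variable [DecidableEq α]

lemma card_filter_subtype_ne_eq_card_farFrom (w : α) (ℓ : ℕ) :
    #{y : {y // y ≠ w} | ℓ < G.dist w y} = #(G.farFrom w ℓ) := by
  rw [farFrom, card_filter, card_filter, Fintype.sum_eq_add_sum_subtype_ne _ w]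
  simp

lemma Connected.card_farFrom_le (hG : G.Connected) (x : α) (ℓ : ℕ) :
    #(G.farFrom x ℓ) ≤ Fintype.card α - 1 - ℓ := by
  obtain h | ⟨b, hb⟩ := (G.farFrom x ℓ).eq_empty_or_nonempty
  · simp [h]
  obtain ⟨p, hp⟩ := (hG x b).exists_walk_length_eq_dist
  have hb : ℓ < p.length := by simpa [farFrom, hp] using hb
  have hnear : ∀ i ≤ ℓ, G.dist x (p.getVert i) = i := fun i hi => by
    simpa using p.dist_getVert_of_length_eq_dist hp (Nat.zero_le i) (by omega)
  have hcard : #((range (ℓ + 1)).image p.getVert) = ℓ + 1 := by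
    rw [card_image_of_injOn, card_range]
    intro i hi j hj hij
    simp only [coe_range, Set.mem_Iio] at hi hj
    rw [← hnear i (by omega), ← hnear j (by omega), hij]
  have hsub : G.farFrom x ℓ ⊆ univ \ (range (ℓ + 1)).image p.getVert := by
    intro c hc
    simp only [farFrom, mem_filter, mem_univ, true_and] at hc
    simp only [mem_sdiff, mem_univ, mem_image, mem_range, true_and, not_exists, not_and]
    rintro i hi rfl
    rw [hnear i (by omega)] at hc
    omega
  have := card_le_card hsub
  rw [card_univ_sdiff, hcard] at this
  omega

lemma card_farPairs_le_of_connected_induce (x : α) (ℓ : ℕ) (hx : (G.induce {x}ᶜ).Connected) :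
    #(G.farPairs ℓ) ≤
      2 * #(G.farFrom x ℓ) + #((G.induce {x}ᶜ : SimpleGraph {a // a ≠ x}).farPairs ℓ) := by
  set G' : SimpleGraph {a // a ≠ x} := G.induce {x}ᶜ
  have hdist : ∀ a b : {a // a ≠ x}, G.dist a b ≤ G'.dist a b := fun a b =>
    (Embedding.induce {x}ᶜ).toHom.dist_le (hx a b)
  have hrow : ∑ b, (if ℓ < G.dist x b then 1 else 0) = #(G.farFrom x ℓ) := by
    rw [farFrom, card_filter]
  have hrow' : ∑ b : {b // b ≠ x}, (if ℓ < G.dist x b then 1 else 0) = #(G.farFrom x ℓ) := by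
    rw [← hrow, Fintype.sum_eq_add_sum_subtype_ne _ x]
    simp
  rw [card_farPairs_eq_sum]
  calc ∑ a, ∑ b, (if ℓ < G.dist a b then 1 else 0)
      = ∑ b, (if ℓ < G.dist x b then 1 else 0) +
          ∑ a : {a // a ≠ x}, ∑ b, (if ℓ < G.dist a.1 b then 1 else 0) :=
        Fintype.sum_eq_add_sum_subtype_ne _ x
    _ ≤ #(G.farFrom x ℓ) + ∑ a : {a // a ≠ x},
          ((if ℓ < G.dist x a then 1 else 0) + ∑ b, if ℓ < G'.dist a b then 1 else 0) := by
        rw [hrow]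
        gcongr with a
        rw [Fintype.sum_eq_add_sum_subtype_ne _ x, dist_comm]
        gcongr with b
        split_ifs <;> grind
    _ = 2 * #(G.farFrom x ℓ) + #(G'.farPairs ℓ) := by
        rw [sum_add_distrib, hrow', card_farPairs_eq_sum]
        ring

theorem Connected.card_farPairs_le (hG : G.Connected) (ℓ : ℕ) :
    #(G.farPairs ℓ) ≤ (Fintype.card α - ℓ) * (Fintype.card α - ℓ - 1) := by
  induction hn : Fintype.card α generalizing α with
  | zero =>
    have : IsEmpty α := Fintype.card_eq_zero_iff.mp hn
    simp [farPairs]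
  | succ n ih =>
    rcases Nat.eq_zero_or_pos n with rfl | hn₀
    · have : Subsingleton α := Fintype.card_le_one_iff_subsingleton.mp hn.le
      simp [farPairs]
    have : Nontrivial α := Fintype.one_lt_card_iff_nontrivial.mp (by omega)
    obtain ⟨x, hx⟩ := hG.exists_connected_induce_compl_singleton_of_finite_nontrivial
    have h₁ := ih (G := (G.induce {x}ᶜ : SimpleGraph {a // a ≠ x})) hx (by simp [filter_ne', hn])
    have h₂ := hG.card_farFrom_le x ℓ
    have h₃ := card_farPairs_le_of_connected_induce x ℓ hx
    rw [hn, Nat.add_sub_cancel] at h₂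
    rcases Nat.lt_or_ge n (ℓ + 1) with h | h
    · rw [show n + 1 - ℓ - 1 = 0 by omega, mul_zero]
      rw [show n - ℓ - 1 = 0 by omega, mul_zero] at h₁
      omega
    · obtain ⟨m, rfl⟩ := Nat.exists_eq_add_of_le h
      rw [show ℓ + 1 + m + 1 - ℓ - 1 = m + 1 by omega, show ℓ + 1 + m + 1 - ℓ = m + 2 by omega]
      rw [show ℓ + 1 + m - ℓ - 1 = m by omega, show ℓ + 1 + m - ℓ = m + 1 by omega] at h₁
      rw [show ℓ + 1 + m - ℓ = m + 1 by omega] at h₂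
      nlinarith

lemma Connected.card_farPairs_one_add [DecidableRel G.Adj] (hG : G.Connected) :
    #(G.farPairs 1) + (2 * #G.edgeFinset + Fintype.card α) =
      Fintype.card α * Fintype.card α := by
  have hrow : ∀ a, #{b | ¬ 1 < G.dist a b} = G.degree a + 1 := by
    intro a
    have : ({b | ¬ 1 < G.dist a b} : Finset α) = insert a (G.neighborFinset a) := by
      ext b
      simp only [mem_filter, mem_univ, true_and, mem_insert, mem_neighborFinset, not_lt,
        Nat.le_one_iff_eq_zero_or_eq_one, hG.dist_eq_zero_iff, dist_eq_one_iff_adj,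
        @eq_comm _ b a]
    rw [this, card_insert_of_notMem (notMem_neighborFinset_self _ _),
      card_neighborFinset_eq_degree]
  have := card_filter_add_card_filter_not (s := univ) (p := fun p : α × α => 1 < G.dist p.1 p.2)
  rw [card_univ, Fintype.card_prod] at this
  rw [← this, ← sum_degrees_eq_twice_card_edges, farPairs, card_filter (fun p => ¬ _),
    Fintype.sum_prod_type]
  simp_rw [← card_filter, hrow, sum_add_distrib]
  simp

lemma IsTree.card_farPairs_one (hG : G.IsTree) :
    #(G.farPairs 1) = (Fintype.card α - 1) * (Fintype.card α - 2) := by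
  classical
  have h₁ := hG.connected.card_farPairs_one_add
  rw [← hG.card_edgeFinset] at h₁ ⊢
  rcases h : #G.edgeFinset with _ | e
  · rw [h] at h₁
    simpa using h₁
  · rw [h] at h₁
    simp only [Nat.add_sub_cancel, show e + 1 + 1 - 2 = e by omega]
    nlinarith

end FarPairs

section Classification

variable {α β : Type*} {G : SimpleGraph α}

lemma dist_starGraph_center_le (r b : α) : (starGraph r).dist r b ≤ 1 := by
  rcases eq_or_ne r b with rfl | h
  · simp
  · exact (dist_eq_one_iff_adj.mpr (starGraph_center_adj h)).le

lemma dist_starGraph_le (r a b : α) : (starGraph r).dist a b ≤ 2 :=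
  calc (starGraph r).dist a b ≤ (starGraph r).dist a r + (starGraph r).dist r b :=
        (connected_starGraph r).dist_triangle
    _ ≤ 2 := by
        rw [dist_comm]
        linarith [dist_starGraph_center_le r a, dist_starGraph_center_le r b]

def Iso.starGraph (e : α ≃ β) (r : α) : starGraph r ≃g starGraph (e r) :=
  ⟨e, by simp [e.injective.eq_iff]⟩

lemma IsUniversal.of_adj_of_forall_dist_le_two (hG : G.Connected) {x c : α} (hxc : G.Adj x c)
    (hx : ∀ y, G.Adj x y → y = c) (h : ∀ z, G.dist x z ≤ 2) : G.IsUniversal c := by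
  intro z hcz
  rcases eq_or_ne z x with rfl | hzx
  · exact hxc.symm
  obtain ⟨p, hp⟩ := (hG x z).exists_walk_length_eq_dist
  cases p with
  | nil => exact absurd rfl hzx
  | cons hadj q =>
    obtain rfl := hx _ hadj
    have := dist_le q
    have := hG.pos_dist_of_ne hcz
    have := h z
    rw [Walk.length_cons] at hp
    exact dist_eq_one_iff_adj.mp (by omega)

lemma IsTree.eq_starGraph (hG : G.IsTree) {c : α} (hc : G.IsUniversal c) :
    G = starGraph c := by
  have hle : starGraph c ≤ G := by
    intro a b h
    obtain ⟨hab, rfl | rfl⟩ := starGraph_adj.mp h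
    · exact hc hab
    · exact (hc hab.symm).symm
  exact le_antisymm
    ((isTree_iff_maximal_isAcyclic.mp (isTree_starGraph c)).2.2 hG.isAcyclic hle) hle

end Classification

end SimpleGraph

section PathStar

variable {n : ℕ}

lemma pathG_eq_pathGraph (n : ℕ) : pathG n = pathGraph n := by
  ext i j
  simp only [pathG, fromRel_adj, pathGraph_adj, ne_eq, Fin.ext_iff]
  omega

lemma pathG_connected (hn : 0 < n) : (pathG n).Connected := by
  obtain ⟨m, rfl⟩ := Nat.exists_eq_add_one_of_ne_zero hn.ne'
  rw [pathG_eq_pathGraph]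
  exact pathGraph_connected m

lemma pathG_adj {i j : Fin n} : (pathG n).Adj i j ↔ (i : ℕ) + 1 = j ∨ (j : ℕ) + 1 = i := by
  simp [pathG_eq_pathGraph, pathGraph_adj]

lemma pathG_dist_le (m : ℕ) {i j : Fin n} (h : (j : ℕ) = i + m) : (pathG n).dist i j ≤ m := by
  induction m generalizing i with
  | zero => simp [Fin.ext (by omega : (i : ℕ) = j)]
  | succ m ih =>
    have hi : (i : ℕ) + 1 < n := by omega
    calc (pathG n).dist i j ≤ (pathG n).dist i ⟨i + 1, hi⟩ + (pathG n).dist ⟨i + 1, hi⟩ j :=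
          (pathG_connected i.pos).dist_triangle
      _ ≤ 1 + m := by
          gcongr
          · exact (dist_eq_one_iff_adj.mpr (pathG_adj.mpr (Or.inl rfl))).le
          · exact ih (by simp; omega)
      _ = m + 1 := by ring

lemma pathG_dist (i j : Fin n) : (pathG n).dist i j = (i - j : ℕ) + (j - i) := by
  have hc := pathG_connected i.pos
  have hup := (hc i j).le_add_dist (f := Fin.val) fun a b h => by
    have := pathG_adj.mp h
    omega
  have hdown := (hc i j).le_add_dist (f := fun a : Fin n => n - a) fun a b h => by
    have := pathG_adj.mp h
    omega
  rcases le_total (i : ℕ) j with h | h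
  · have := pathG_dist_le (j - i) (i := i) (j := j) (by omega)
    omega
  · have := pathG_dist_le (i - j) (i := j) (j := i) (by omega)
    rw [dist_comm] at this
    omega

lemma le_card_farPairs_pathG (ℓ : ℕ) : (n - ℓ) * (n - ℓ - 1) ≤ #((pathG n).farPairs ℓ) := by
  let f : Fin (n - ℓ) × Fin (n - ℓ) → Fin n × Fin n := fun p =>
    if p.1 < p.2 then (⟨p.1, by omega⟩, ⟨p.2 + ℓ, by omega⟩)
    else (⟨p.1 + ℓ, by omega⟩, ⟨p.2, by omega⟩)
  calc (n - ℓ) * (n - ℓ - 1) = #(univ : Finset (Fin (n - ℓ))).offDiag := by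
        simp [offDiag_card, Nat.mul_sub_one]
    _ ≤ #((pathG n).farPairs ℓ) := by
        refine card_le_card_of_injOn f (fun p hp => ?_) (fun p hp q hq hpq => ?_)
        · simp only [coe_offDiag, coe_univ, Set.mem_offDiag, Set.mem_univ, true_and,
            ne_eq, Fin.ext_iff] at hp
          simp only [farPairs, coe_filter, mem_univ, true_and, Set.mem_ofPred_eq, f]
          split_ifs with h <;> simp only [pathG_dist, Fin.lt_def] at h ⊢ <;> omega
        · simp only [f, Prod.ext_iff, Fin.ext_iff] at hpq ⊢
          split_ifs at hpq with h₁ h₂ h₂ <;> simp only [Fin.lt_def] at * <;> omega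

lemma le_card_farFrom_pathG (hn : 0 < n) (ℓ : ℕ) :
    n - 1 - ℓ ≤ #((pathG n).farFrom ⟨0, hn⟩ ℓ) := by
  rcases lt_or_ge ℓ n with hℓ | hℓ
  · have : (pathG n).farFrom ⟨0, hn⟩ ℓ = Ioi ⟨ℓ, hℓ⟩ := by
      ext b
      simp [farFrom, pathG_dist, Fin.lt_def]
    rw [this, Fin.card_Ioi]
  · omega

lemma starG_eq_starGraph (hn : 0 < n) : starG n = starGraph ⟨0, hn⟩ := by
  ext i j
  simp only [starG, fromRel_adj, starGraph_adj, Fin.ext_iff]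
  omega

variable {α : Type*} [Fintype α] {G : SimpleGraph α}

lemma nonempty_iso_pathG_of_dist_eq {a b : α} (h : G.dist a b = Fintype.card α - 1) :
    Nonempty (G ≃g pathG (Fintype.card α)) := by
  have hr : G.Reachable a b := by
    rcases eq_or_ne a b with rfl | hab
    · rfl
    refine Reachable.of_dist_ne_zero fun h0 => hab ?_
    exact Fintype.card_le_one_iff.mp (by omega) a b
  obtain ⟨p, hp⟩ := hr.exists_walk_length_eq_dist
  have hdist : ∀ i j : Fin (Fintype.card α),
      G.dist (p.getVert i) (p.getVert j) = (i - j : ℕ) + (j - i) := by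
    intro i j
    rcases le_total (i : ℕ) j with hij | hij
    · rw [p.dist_getVert_of_length_eq_dist hp hij (by omega)]
      omega
    · rw [dist_comm, p.dist_getVert_of_length_eq_dist hp hij (by omega)]
      omega
  have hinj : Function.Injective fun i : Fin (Fintype.card α) => p.getVert i := by
    intro i j hij
    have := hdist i j
    simp only [hij, dist_self] at this
    exact Fin.ext (by omega)
  let e := Equiv.ofBijective _ ((Fintype.bijective_iff_injective_and_card _).mpr ⟨hinj, by simp⟩)
  refine ⟨(⟨e, fun {i j} => ?_⟩ : pathG _ ≃g G).symm⟩
  rw [← dist_eq_one_iff_adj, Equiv.ofBijective_apply, Equiv.ofBijective_apply, hdist]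
  simp only [pathG, fromRel_adj, ne_eq, Fin.ext_iff]
  omega

lemma SimpleGraph.IsTree.nonempty_iso_starG_of_dist_le_two [Nontrivial α] (hG : G.IsTree)
    (h : ∀ a b, G.dist a b ≤ 2) : Nonempty (G ≃g starG (Fintype.card α)) := by
  classical
  obtain ⟨x, hx⟩ := hG.exists_vert_degree_one_of_nontrivial
  obtain ⟨c, hxc, hc⟩ := degree_eq_one_iff_existsUnique_adj.mp hx
  rw [hG.eq_starGraph (IsUniversal.of_adj_of_forall_dist_le_two hG.connected hxc hc (h x)),
    starG_eq_starGraph Fintype.card_pos]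
  let e := (Fintype.equivFin α).trans (Equiv.swap (Fintype.equivFin α c) ⟨0, Fintype.card_pos⟩)
  have hec : e c = ⟨0, Fintype.card_pos⟩ := by simp [e]
  exact ⟨hec ▸ Iso.starGraph e c⟩

end PathStar

section Harary

variable {α β : Type*} [Fintype α] [Fintype β] {G : SimpleGraph α} {H : SimpleGraph β}

lemma harary_eq_sum_inv (G : SimpleGraph α) :
    harary G = (∑ a, ∑ b, (G.dist a b : ℝ)⁻¹) / 2 := by
  unfold harary
  congr 1
  refine sum_congr rfl fun a _ => sum_congr rfl fun b _ => ?_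
  split_ifs with h <;> simp [h]

lemma harary_eq_sum_offDiag [DecidableEq α] (G : SimpleGraph α) :
    harary G = (∑ p ∈ univ.offDiag, (G.dist p.1 p.2 : ℝ)⁻¹) / 2 := by
  rw [harary_eq_sum_inv, ← sum_product', ← sum_filter_of_ne (p := fun p : α × α => p.1 ≠ p.2)]
  · congr 2
    ext
    simp
  · intro p _ h hp
    simp [hp] at h

variable [DecidableEq α] [DecidableEq β]

theorem harary_lt_harary_of_card_farPairs_le (hG : G.Connected) (hH : H.Connected)
    (hcard : Fintype.card α = Fintype.card β)
    (hfar : ∀ ℓ, 1 ≤ ℓ → #(H.farPairs ℓ) ≤ #(G.farPairs ℓ))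
    (hstrict : ∃ ℓ, #(H.farPairs ℓ) < #(G.farPairs ℓ)) :
    harary G < harary H := by
  simp only [harary_eq_sum_offDiag, ← filter_offDiag_eq_farPairs] at hfar hstrict ⊢
  have := sum_comp_lt_sum_comp_of_card_lt_le (g := fun t => (t : ℝ)⁻¹)
    (K := Fintype.card α - 1)
    (fun p hp => hG.dist_mem_Icc (mem_offDiag.mp hp).2.2)
    (fun p hp => hcard ▸ hH.dist_mem_Icc (mem_offDiag.mp hp).2.2) (by simp [hcard])
    (fun ℓ hℓ => (inv_lt_inv₀ (by positivity) (by positivity)).mpr (by push_cast; linarith))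
    hfar hstrict
  linarith

theorem sum_inv_add_dist_le_of_card_farFrom_le {a : ℝ} (ha : 0 ≤ a) (hG : G.Connected)
    (hH : H.Connected) (hcard : Fintype.card α = Fintype.card β) (v : α) (w : β)
    (hfar : ∀ ℓ, 1 ≤ ℓ → #(H.farFrom w ℓ) ≤ #(G.farFrom v ℓ)) :
    ∑ x : {x // x ≠ v}, (a + G.dist v x)⁻¹ ≤ ∑ y : {y // y ≠ w}, (a + H.dist w y)⁻¹ := by
  simp only [← card_filter_subtype_ne_eq_card_farFrom] at hfar
  exact sum_comp_le_sum_comp_of_card_lt_le (g := fun t => (a + t)⁻¹) (K := Fintype.card α - 1)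
    (fun x _ => hG.dist_mem_Icc (Ne.symm x.2))
    (fun y _ => hcard ▸ hH.dist_mem_Icc (Ne.symm y.2)) (by simp [hcard])
    (fun ℓ hℓ => inv_anti₀ (by positivity) (by push_cast; linarith)) hfar

end Harary

section Graft

variable {V W : Type*} {G : SimpleGraph V} {u : V} {H : SimpleGraph W} {w : W}

@[simp] lemma graft_adj_inl_inl {x x' : V} :
    (graft G u H w).Adj (.inl x) (.inl x') ↔ G.Adj x x' := by
  simp only [graft, fromRel_adj]
  grind [G.adj_symm, G.ne_of_adj]

@[simp] lemma graft_adj_inr_inr {y y' : {z // z ≠ w}} :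
    (graft G u H w).Adj (.inr y) (.inr y') ↔ H.Adj y y' := by
  simp only [graft, fromRel_adj]
  grind [H.adj_symm, H.ne_of_adj]

@[simp] lemma graft_adj_inl_inr {x : V} {y : {z // z ≠ w}} :
    (graft G u H w).Adj (.inl x) (.inr y) ↔ x = u ∧ H.Adj w y := by
  simp only [graft, fromRel_adj]
  grind

@[simp] lemma graft_adj_inr_inl {x : V} {y : {z // z ≠ w}} :
    (graft G u H w).Adj (.inr y) (.inl x) ↔ x = u ∧ H.Adj w y := by
  simp only [graft, fromRel_adj]
  grind

lemma graft_le_add_one_of_adj {f : V → ℕ} {g : W → ℕ} (hf : ∀ a b, G.Adj a b → f b ≤ f a + 1)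
    (hg : ∀ a b, H.Adj a b → g b ≤ g a + 1) (hfg : f u = g w) :
    ∀ a b, (graft G u H w).Adj a b →
      Sum.elim f (g ∘ Subtype.val) b ≤ Sum.elim f (g ∘ Subtype.val) a + 1 := by
  rintro (x | y) (x' | y') h <;> simp only [graft_adj_inl_inl, graft_adj_inl_inr,
    graft_adj_inr_inl, graft_adj_inr_inr] at h
  · exact hf _ _ h
  · obtain ⟨rfl, h⟩ := h
    simpa [hfg] using hg _ _ h
  · obtain ⟨rfl, h⟩ := h
    simpa [hfg] using hg _ _ h.symm
  · exact hg _ _ h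

variable (G u H w) in
def graftInl : G →g graft G u H w := ⟨Sum.inl, graft_adj_inl_inl.mpr⟩

variable [DecidableEq W]

variable (G u H w) in
def graftInr : H →g graft G u H w where
  toFun z := if h : z = w then .inl u else .inr ⟨z, h⟩
  map_rel' {a b} h := by
    by_cases ha : a = w <;> by_cases hb : b = w
    · exact absurd (ha.trans hb.symm) h.ne
    · subst ha
      simpa [hb] using h
    · subst hb
      simpa [ha] using h.symm
    · simpa [ha, hb] using h

@[simp] lemma graftInr_self : graftInr G u H w w = .inl u := by simp [graftInr]

@[simp] lemma graftInr_val (y : {z // z ≠ w}) : graftInr G u H w y = .inr y := by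
  simp [graftInr, y.2]

lemma graft_connected (hG : G.Connected) (hH : H.Connected) : (graft G u H w).Connected := by
  refine (connected_iff_exists_forall_reachable _).mpr ⟨.inl u, ?_⟩
  rintro (x | y)
  · exact (hG u x).map (graftInl G u H w)
  · simpa using (hH w y).map (graftInr G u H w)

-- The distance from `x`, continued through the cut vertex `u` into `H`, is a potential that
-- changes by at most one along every edge of the graft.
lemma le_graft_dist_inl (hG : G.Connected) (hH : H.Connected) (x : V) (b : V ⊕ {z // z ≠ w}) :
    Sum.elim (G.dist x) (fun y : {z // z ≠ w} => G.dist x u + H.dist w y) b ≤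
      (graft G u H w).dist (.inl x) b := by
  have := (graft_connected hG hH (.inl x) b).le_add_dist (graft_le_add_one_of_adj (u := u)
    (w := w) (f := G.dist x) (g := fun z => G.dist x u + H.dist w z)
    (fun _ _ h => h.dist_le_dist_add_one)
    (fun _ _ h => by have := h.dist_le_dist_add_one (x := w); omega) (by simp))
  rwa [Sum.elim_inl, dist_self, zero_add] at this

lemma graft_dist_inl_inl (hG : G.Connected) (hH : H.Connected) (x x' : V) :
    (graft G u H w).dist (.inl x) (.inl x') = G.dist x x' :=
  le_antisymm ((graftInl G u H w).dist_le (hG x x')) (le_graft_dist_inl hG hH x (.inl x'))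

lemma graft_dist_inl_inr (hG : G.Connected) (hH : H.Connected) (x : V) (y : {z // z ≠ w}) :
    (graft G u H w).dist (.inl x) (.inr y) = G.dist x u + H.dist w y := by
  refine le_antisymm ?_ (le_graft_dist_inl hG hH x (.inr y))
  calc (graft G u H w).dist (.inl x) (.inr y)
      ≤ (graft G u H w).dist (.inl x) (.inl u) + (graft G u H w).dist (.inl u) (.inr y) :=
        (graft_connected hG hH).dist_triangle
    _ ≤ G.dist x u + H.dist w y := by
        rw [graft_dist_inl_inl hG hH]
        simpa using (graftInr G u H w).dist_le (hH w y)

lemma graft_dist_inr_inl (hG : G.Connected) (hH : H.Connected) (x : V) (y : {z // z ≠ w}) :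
    (graft G u H w).dist (.inr y) (.inl x) = G.dist x u + H.dist w y := by
  rw [dist_comm, graft_dist_inl_inr hG hH]

lemma graft_dist_inr_inr (hG : G.Connected) (hH : H.Connected) (y y' : {z // z ≠ w}) :
    (graft G u H w).dist (.inr y) (.inr y') = H.dist y y' := by
  refine le_antisymm (by simpa using (graftInr G u H w).dist_le (hH y y')) ?_
  have := (graft_connected hG hH (.inr y) (.inr y')).le_add_dist (graft_le_add_one_of_adj
    (u := u) (w := w) (f := fun z => H.dist y w + G.dist u z) (g := H.dist y)
    (fun _ _ h => by have := h.dist_le_dist_add_one (x := u); omega)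
    (fun _ _ h => h.dist_le_dist_add_one) (by simp))
  simpa only [Sum.elim_inr, Function.comp_apply, dist_self, zero_add] using this

theorem harary_graft [Fintype V] [DecidableEq V] [Fintype W] (hG : G.Connected)
    (hH : H.Connected) :
    harary (graft G u H w) = harary G + harary H +
      ∑ x : {x // x ≠ u}, ∑ y : {y // y ≠ w}, ((G.dist x u : ℝ) + H.dist w y)⁻¹ := by
  have hsumH : ∑ a, ∑ b, (H.dist a b : ℝ)⁻¹ =
      ∑ y : {y // y ≠ w}, ∑ y' : {y // y ≠ w}, (H.dist y y' : ℝ)⁻¹ +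
        2 * ∑ y : {y // y ≠ w}, (H.dist w y : ℝ)⁻¹ := by
    simp_rw [Fintype.sum_eq_add_sum_subtype_ne _ w, dist_self, dist_comm (v := w)]
    simp only [Nat.cast_zero, inv_zero, zero_add, sum_add_distrib]
    ring
  have hcross : ∑ x, ∑ y : {y // y ≠ w}, ((G.dist x u : ℝ) + H.dist w y)⁻¹ =
      ∑ y : {y // y ≠ w}, (H.dist w y : ℝ)⁻¹ +
        ∑ x : {x // x ≠ u}, ∑ y : {y // y ≠ w}, ((G.dist x u : ℝ) + H.dist w y)⁻¹ := by
    rw [Fintype.sum_eq_add_sum_subtype_ne _ u]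
    simp
  have hcross' : ∑ y : {y // y ≠ w}, ∑ x, ((G.dist x u : ℝ) + H.dist w y)⁻¹ =
      ∑ y : {y // y ≠ w}, (H.dist w y : ℝ)⁻¹ +
        ∑ x : {x // x ≠ u}, ∑ y : {y // y ≠ w}, ((G.dist x u : ℝ) + H.dist w y)⁻¹ := by
    rw [sum_comm, hcross]
  simp only [harary_eq_sum_inv, Fintype.sum_sum_type, graft_dist_inl_inl hG hH,
    graft_dist_inl_inr hG hH, graft_dist_inr_inl hG hH, graft_dist_inr_inr hG hH, Nat.cast_add,
    sum_add_distrib]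
  rw [hcross, hcross', hsumH]
  ring

end Graft

theorem harary_graft_lt_harary_graft {V W₁ W₂ : Type*} [Fintype V] [Fintype W₁]
    [DecidableEq W₁] [Fintype W₂] [DecidableEq W₂] {G : SimpleGraph V} (hG : G.Connected)
    (u : V) {H₁ : SimpleGraph W₁} (hH₁ : H₁.Connected) (w₁ : W₁) {H₂ : SimpleGraph W₂}
    (hH₂ : H₂.Connected) (w₂ : W₂) (hcard : Fintype.card W₁ = Fintype.card W₂)
    (hfar : ∀ ℓ, 1 ≤ ℓ → #(H₂.farPairs ℓ) ≤ #(H₁.farPairs ℓ))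
    (hstrict : ∃ ℓ, #(H₂.farPairs ℓ) < #(H₁.farPairs ℓ))
    (hfarFrom : ∀ ℓ, 1 ≤ ℓ → #(H₂.farFrom w₂ ℓ) ≤ #(H₁.farFrom w₁ ℓ)) :
    harary (graft G u H₁ w₁) < harary (graft G u H₂ w₂) := by
  classical
  rw [harary_graft hG hH₁, harary_graft hG hH₂]
  have hcross := sum_le_sum (s := univ) fun (x : {x // x ≠ u}) _ =>
    sum_inv_add_dist_le_of_card_farFrom_le (a := G.dist x u) (Nat.cast_nonneg _) hH₁ hH₂ hcard
      w₁ w₂ hfarFrom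
  linarith [harary_lt_harary_of_card_farPairs_le hH₁ hH₂ hcard hfar hstrict]

theorem harary_graft_pathG_lt {V W : Type*} [Fintype V] [Fintype W] [DecidableEq W]
    {G : SimpleGraph V} (hG : G.Connected) (u : V) {H : SimpleGraph W} (hH : H.Connected)
    (hHP : ¬ Nonempty (H ≃g pathG (Fintype.card W))) (w : W) :
    harary (graft G u (pathG (Fintype.card W)) ⟨0, Fintype.card_pos_iff.mpr hH.nonempty⟩) <
      harary (graft G u H w) := by
  have hn := Fintype.card_pos_iff.mpr hH.nonempty
  have hne : ∀ a b, H.dist a b ≠ Fintype.card W - 1 := fun a b h =>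
    hHP (nonempty_iso_pathG_of_dist_eq h)
  have hn₂ : 2 ≤ Fintype.card W := by
    have := hne hH.nonempty.some hH.nonempty.some
    rw [dist_self] at this
    omega
  have hdiam : ∀ a b, H.dist a b ≤ Fintype.card W - 2 := fun a b => by
    have := hH.dist_le_card_sub_one a b
    have := hne a b
    omega
  refine harary_graft_lt_harary_graft hG u (pathG_connected hn) _ hH w (by simp)
    (fun ℓ _ => (hH.card_farPairs_le ℓ).trans (by simpa using le_card_farPairs_pathG ℓ))
    ⟨Fintype.card W - 2, ?_⟩
    (fun ℓ _ => (hH.card_farFrom_le w ℓ).trans (by simpa using le_card_farFrom_pathG hn ℓ))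
  rw [card_farPairs_eq_zero.mpr hdiam]
  exact card_farPairs_pos.mpr ⟨⟨0, hn⟩, ⟨Fintype.card W - 1, by omega⟩, by simp [pathG_dist]; omega⟩

theorem harary_graft_lt_starG {V W : Type*} [Fintype V] [Fintype W] [DecidableEq W]
    {G : SimpleGraph V} (hG : G.Connected) (u : V) {T : SimpleGraph W} (hT : T.IsTree)
    (hfar : ∃ a b, 2 < T.dist a b) (w : W) :
    harary (graft G u T w) <
      harary (graft G u (starG (Fintype.card W)) ⟨0, Fintype.card_pos_iff.mpr hT.nonempty⟩) := by
  have hn := Fintype.card_pos_iff.mpr hT.nonempty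
  have hS : (starG (Fintype.card W)).IsTree := starG_eq_starGraph hn ▸ isTree_starGraph _
  have hSdist : ∀ a b, (starG (Fintype.card W)).dist a b ≤ 2 := fun a b => by
    rw [starG_eq_starGraph hn]
    exact dist_starGraph_le _ a b
  refine harary_graft_lt_harary_graft hG u hT.connected w hS.connected _ (by simp)
    (fun ℓ hℓ => ?_) ⟨2, ?_⟩ (fun ℓ hℓ => ?_)
  · rcases hℓ.eq_or_lt with rfl | hℓ
    · rw [hT.card_farPairs_one, hS.card_farPairs_one, Fintype.card_fin]
    · rw [card_farPairs_eq_zero.mpr fun a b => (hSdist a b).trans hℓ]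
      exact Nat.zero_le _
  · rw [card_farPairs_eq_zero.mpr hSdist]
    exact card_farPairs_pos.mpr hfar
  · rw [card_farFrom_eq_zero.mpr fun b => ?_]
    · exact Nat.zero_le _
    · rw [starG_eq_starGraph hn]
      exact (dist_starGraph_center_le _ b).trans hℓ

theorem harary_graft_path_lt_tree_lt_star {V W : Type*} [Fintype V] [Fintype W]
    [DecidableEq W] (G₀ : SimpleGraph V) (hG₀ : G₀.Connected) (u : V)
    (k : ℕ) (hk : 4 ≤ k) (T : SimpleGraph W) (hT : T.IsTree) (hcard : Fintype.card W = k)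
    (hTP : ¬ Nonempty (T ≃g pathG k)) (hTS : ¬ Nonempty (T ≃g starG k)) (w : W) :
    harary (graft G₀ u (pathG k) (⟨0, by omega⟩ : Fin k)) < harary (graft G₀ u T w) ∧
    harary (graft G₀ u T w) < harary (graft G₀ u (starG k) (⟨0, by omega⟩ : Fin k)) := by
  subst hcard
  have : Nontrivial W := Fintype.one_lt_card_iff_nontrivial.mp (by omega)
  refine ⟨harary_graft_pathG_lt hG₀ u hT.connected hTP w, harary_graft_lt_starG hG₀ u hT ?_ w⟩
  by_contra! h
  exact hTS (hT.nonempty_iso_starG_of_dist_le_two h)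
end

section
/- Let n and Δ be integers with 2 ≤ Δ ≤ n−1. Then H(B_{n,Δ}) = n·H_{n−Δ} − n + Δ + (Δ−1)(Δ−2)/4 + (Δ−1)/(n−Δ+1), where H_k = 1 + 1/2 + … + 1/k denotes the k-th harmonic number. -/
open Finset SimpleGraph

/-!
In the spider with legs of lengths `L i`, the distance between two vertices is explicit: `j + 1`
from the center to vertex `j` of a leg, `|j - j'|` inside a leg, and `j + j' + 2` across two legs.
This function is 1-Lipschitz along edges, hence a lower bound for walk lengths, and it is realised
by explicit walks. The Harary sum therefore splits into center-to-leg terms (harmonic numbers),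
within-leg terms (twice the Harary index `ℓ H_ℓ - ℓ` of a path) and cross-leg terms. For the
broom, the legs have lengths `n - Δ, 1, …, 1`, and every term is a harmonic number.
-/

lemma harary_eq_sum_inv_dist {V : Type*} [Fintype V] (G : SimpleGraph V) :
    harary G = (∑ u, ∑ v, (1 : ℝ) / G.dist u v) / 2 := by
  unfold harary
  congr 1
  refine sum_congr rfl fun u _ => sum_congr rfl fun v _ => ?_
  split_ifs with h <;> simp [h]

noncomputable def pathInvDistSum (ℓ : ℕ) : ℝ :=
  ∑ a ∈ range ℓ, ∑ b ∈ range ℓ, (1 : ℝ) / Nat.dist a b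

noncomputable def legPairInvDistSum (ℓ ℓ' : ℕ) : ℝ :=
  ∑ a ∈ range ℓ, ∑ b ∈ range ℓ', (1 : ℝ) / (a + b + 2)

lemma sum_range_inv_dist_self (ℓ : ℕ) : ∑ a ∈ range ℓ, (1 : ℝ) / Nat.dist a ℓ = harmonic ℓ := by
  rw [← sum_range_reflect, harmonic]
  push_cast
  refine sum_congr rfl fun a ha => ?_
  rw [mem_range] at ha
  rw [Nat.dist_eq_sub_of_le (by omega), show ℓ - (ℓ - 1 - a) = a + 1 by omega]
  push_cast
  ring

lemma pathInvDistSum_eq (ℓ : ℕ) : pathInvDistSum ℓ = 2 * (ℓ * harmonic ℓ - ℓ) := by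
  induction ℓ with
  | zero => simp [pathInvDistSum]
  | succ ℓ ih =>
    have hrow : ∑ b ∈ range ℓ, (1 : ℝ) / Nat.dist ℓ b = harmonic ℓ := by
      simpa only [Nat.dist_comm] using sum_range_inv_dist_self ℓ
    rw [pathInvDistSum] at ih ⊢
    simp only [sum_range_succ, sum_add_distrib, ih, hrow, sum_range_inv_dist_self,
      Nat.dist_self, harmonic_succ]
    push_cast
    field_simp
    ring

lemma legPairInvDistSum_comm (ℓ ℓ' : ℕ) : legPairInvDistSum ℓ ℓ' = legPairInvDistSum ℓ' ℓ := by
  rw [legPairInvDistSum, legPairInvDistSum, sum_comm]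
  simp only [add_comm (_ : ℝ) (_ : ℝ)]

lemma legPairInvDistSum_one_right (ℓ : ℕ) :
    legPairInvDistSum ℓ 1 = harmonic (ℓ + 1) - 1 := by
  rw [legPairInvDistSum, harmonic, sum_range_succ']
  push_cast
  simp only [sum_range_one, Nat.cast_zero, add_zero]
  ring_nf

lemma sum_fin_inv_succ_eq_harmonic (ℓ : ℕ) :
    ∑ j : Fin ℓ, (1 : ℝ) / ((j : ℝ) + 1) = harmonic ℓ := by
  simp [harmonic, ← Fin.sum_univ_eq_sum_range]

lemma sum_sum_fin_ite_eq (d : ℕ) (a b : ℝ) :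
    ∑ i : Fin d, ∑ j : Fin d, (if i = j then a else b) = d * a + d * (d - 1) * b := by
  have hrow (i : Fin d) : ∑ j : Fin d, (if i = j then a else b) = a + (d - 1) * b := by
    simp_rw [show ∀ j, (if i = j then a else b) = b + if i = j then a - b else 0 by
      intro j; split_ifs <;> ring]
    simp only [sum_add_distrib, sum_ite_eq, mem_univ, if_true, sum_const, card_univ,
      Fintype.card_fin, nsmul_eq_mul]
    ring
  simp only [hrow, sum_const, card_univ, Fintype.card_fin, nsmul_eq_mul]
  ring

section Spider

variable {k : ℕ} {L : Fin k → ℕ}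

def spiderDist : Option (Σ i : Fin k, Fin (L i)) → Option (Σ i : Fin k, Fin (L i)) → ℕ
  | none, none => 0
  | none, some ⟨_, j⟩ => j + 1
  | some ⟨_, j⟩, none => j + 1
  | some ⟨i, j⟩, some ⟨i', j'⟩ => if i = i' then Nat.dist j j' else j + j' + 2

@[simp] lemma spiderDist_none_none : spiderDist (L := L) none none = 0 := rfl

@[simp] lemma spiderDist_none_some (x : Σ i : Fin k, Fin (L i)) :
    spiderDist none (some x) = x.2 + 1 := rfl

@[simp] lemma spiderDist_some_none (x : Σ i : Fin k, Fin (L i)) :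
    spiderDist (some x) none = x.2 + 1 := rfl

lemma spiderDist_some_some (i i' : Fin k) (j : Fin (L i)) (j' : Fin (L i')) :
    spiderDist (some ⟨i, j⟩) (some ⟨i', j'⟩) =
      if i = i' then Nat.dist j j' else j + j' + 2 := rfl

@[simp] lemma spiderDist_self (u : Option (Σ i : Fin k, Fin (L i))) : spiderDist u u = 0 := by
  rcases u with _ | ⟨i, j⟩ <;> simp [spiderDist_some_some]

lemma spiderDist_le_of_adj {u w : Option (Σ i : Fin k, Fin (L i))} (h : (spider L).Adj u w)
    (v : Option (Σ i : Fin k, Fin (L i))) : spiderDist u v ≤ spiderDist w v + 1 := by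
  rw [spider, fromRel_adj] at h
  obtain ⟨-, h | h⟩ := h <;>
    obtain ⟨i, j, rfl, rfl, hj⟩ | ⟨i, j, j', rfl, rfl, hj⟩ := h <;>
    rcases v with _ | ⟨i', j''⟩ <;>
    simp only [spiderDist_none_none, spiderDist_none_some, spiderDist_some_none,
      spiderDist_some_some] <;>
    (try split_ifs) <;> simp_all [Nat.dist] <;> omega

lemma spiderDist_le_length {u v : Option (Σ i : Fin k, Fin (L i))} (p : (spider L).Walk u v) :
    spiderDist u v ≤ p.length := by
  induction p with
  | nil => simp
  | cons h p ih => exact (spiderDist_le_of_adj h _).trans (by simpa using ih)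

lemma spider_adj_succ (i : Fin k) (a : ℕ) (h : a + 1 < L i) :
    (spider L).Adj (some ⟨i, ⟨a + 1, h⟩⟩) (some ⟨i, ⟨a, a.lt_succ_self.trans h⟩⟩) := by
  rw [spider, fromRel_adj]
  exact ⟨by simp, Or.inr (Or.inr ⟨i, _, _, rfl, rfl, rfl⟩)⟩

lemma spider_adj_none (i : Fin k) (h : 0 < L i) : (spider L).Adj (some ⟨i, ⟨0, h⟩⟩) none := by
  rw [spider, fromRel_adj]
  exact ⟨by simp, Or.inr (Or.inl ⟨i, _, rfl, rfl, rfl⟩)⟩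

lemma exists_spider_walk_down (i : Fin k) (a : ℕ) :
    ∀ (d : ℕ) (h : a + d < L i), ∃ p : (spider L).Walk (some ⟨i, ⟨a + d, h⟩⟩)
      (some ⟨i, ⟨a, by omega⟩⟩), p.length = d
  | 0, _ => ⟨.nil, rfl⟩
  | d + 1, h => by
    obtain ⟨p, hp⟩ := exists_spider_walk_down i a d (by omega)
    exact ⟨.cons (spider_adj_succ i (a + d) h) p, by simp [hp]⟩

lemma exists_spider_walk_leg (i : Fin k) (j j' : Fin (L i)) :
    ∃ p : (spider L).Walk (some ⟨i, j⟩) (some ⟨i, j'⟩), p.length = Nat.dist j j' := by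
  wlog h : (j' : ℕ) ≤ j generalizing j j'
  · obtain ⟨p, hp⟩ := this j' j (by omega)
    exact ⟨p.reverse, by simp [hp, Nat.dist_comm]⟩
  obtain ⟨p, hp⟩ := exists_spider_walk_down (L := L) i j' (j - j') (by omega)
  refine ⟨p.copy (by congr; omega) rfl, ?_⟩
  simp [hp, Nat.dist_eq_sub_of_le_right h]

lemma exists_spider_walk_none (i : Fin k) (j : Fin (L i)) :
    ∃ p : (spider L).Walk (some ⟨i, j⟩) none, p.length = j + 1 := by
  obtain ⟨p, hp⟩ := exists_spider_walk_leg i j ⟨0, j.pos⟩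
  exact ⟨p.concat (spider_adj_none i _), by simp [hp, Nat.dist]⟩

lemma exists_spider_walk (u v : Option (Σ i : Fin k, Fin (L i))) :
    ∃ p : (spider L).Walk u v, p.length = spiderDist u v := by
  rcases u with _ | ⟨i, j⟩ <;> rcases v with _ | ⟨i', j'⟩
  · exact ⟨.nil, rfl⟩
  · obtain ⟨p, hp⟩ := exists_spider_walk_none i' j'
    exact ⟨p.reverse, by simp [hp]⟩
  · exact exists_spider_walk_none i j
  · by_cases hi : i = i'
    · subst hi
      simpa [spiderDist_some_some] using exists_spider_walk_leg i j j'
    · obtain ⟨p, hp⟩ := exists_spider_walk_none i j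
      obtain ⟨q, hq⟩ := exists_spider_walk_none i' j'
      exact ⟨p.append q.reverse, by simp [hp, hq, hi, spiderDist_some_some]; omega⟩

lemma dist_spider (u v : Option (Σ i : Fin k, Fin (L i))) :
    (spider L).dist u v = spiderDist u v := by
  obtain ⟨p, hp⟩ := exists_spider_walk u v
  obtain ⟨q, hq⟩ := Reachable.exists_walk_length_eq_dist ⟨p⟩
  exact le_antisymm (hp ▸ dist_le p) (hq ▸ spiderDist_le_length q)

lemma sum_inv_spiderDist_legs (i i' : Fin k) :
    ∑ j : Fin (L i), ∑ j' : Fin (L i'), (1 : ℝ) / spiderDist (some ⟨i, j⟩) (some ⟨i', j'⟩) =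
      if i = i' then pathInvDistSum (L i) else legPairInvDistSum (L i) (L i') := by
  split_ifs with h
  · subst h
    simp [spiderDist_some_some, pathInvDistSum, ← Fin.sum_univ_eq_sum_range]
  · simp [spiderDist_some_some, h, legPairInvDistSum, ← Fin.sum_univ_eq_sum_range]

variable (L) in
lemma two_mul_harary_spider :
    2 * harary (spider L) = 2 * ∑ i, (harmonic (L i) : ℝ) +
      ∑ i, ∑ i', if i = i' then pathInvDistSum (L i) else legPairInvDistSum (L i) (L i') := by
  rw [harary_eq_sum_inv_dist]
  simp only [dist_spider, Fintype.sum_option, Fintype.sum_sigma, spiderDist_none_none,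
    spiderDist_none_some, spiderDist_some_none, ← sum_inv_spiderDist_legs, sum_add_distrib,
    Nat.cast_zero, div_zero, zero_add, ← sum_fin_inv_succ_eq_harmonic]
  rw [sum_congr rfl fun i _ => sum_comm (s := (univ : Finset (Fin k)))]
  push_cast
  ring

end Spider

lemma broomLegs_zero (n k : ℕ) : broomLegs n (k + 1) 0 = n - (k + 1) := rfl

lemma broomLegs_succ (n k : ℕ) (i : Fin k) : broomLegs n (k + 1) i.succ = 1 := by
  simp [broomLegs]

lemma two_mul_harary_broom (d m : ℕ) :
    2 * harary (broom (d + 1 + m) (d + 1)) =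
      2 * (harmonic m + d) + 2 * (m * harmonic m - m) + 2 * d * (harmonic (m + 1) - 1) +
        d * (d - 1) / 2 := by
  rw [broom, two_mul_harary_spider]
  simp only [Fin.sum_univ_succ, broomLegs_zero, broomLegs_succ, Fin.succ_inj, if_true,
    Fin.succ_ne_zero, eq_comm (a := (0 : Fin (d + 1))), if_false, Nat.add_sub_cancel_left,
    sum_add_distrib, sum_sum_fin_ite_eq, sum_const, card_univ, Fintype.card_fin, nsmul_eq_mul,
    pathInvDistSum_eq, legPairInvDistSum_comm 1, legPairInvDistSum_one_right]
  norm_num [harmonic_succ]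
  ring

theorem harary_broom_formula (n Δ : ℕ) (h1 : 2 ≤ Δ) (h2 : Δ ≤ n - 1) :
    harary (broom n Δ) =
      (n : ℝ) * ((harmonic (n - Δ) : ℚ) : ℝ) - (n : ℝ) + (Δ : ℝ) +
        ((Δ : ℝ) - 1) * ((Δ : ℝ) - 2) / 4 + ((Δ : ℝ) - 1) / ((n : ℝ) - (Δ : ℝ) + 1) := by
  obtain ⟨d, rfl⟩ : ∃ d, Δ = d + 1 := ⟨Δ - 1, by omega⟩
  obtain ⟨m, rfl⟩ : ∃ m, n = d + 1 + m := ⟨n - (d + 1), by omega⟩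
  have h := two_mul_harary_broom d m
  have hm : (m : ℝ) + 1 ≠ 0 := by positivity
  rw [harmonic_succ] at h
  rw [Nat.add_sub_cancel_left]
  push_cast at h ⊢
  rw [show (d : ℝ) + 1 + m - (d + 1) + 1 = m + 1 by ring]
  field_simp at h ⊢
  linear_combination h
end
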